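/- Let F be a field and let A(b) denote the n×n matrix with fixed diagonal (d_1,...,d_n) ∈ F^n, subdiagonal entries 1, last column (b_1,...,b_{n-1},d_n), and zeros elsewhere, as a function of b = (b_1,...,b_{n-1}) ∈ F^{n-1}. Then the map F^{n-1} → F^{n-1} sending b to the tuple of coefficients (c_0, c_1, ..., c_{n-2}) of det(tI - A(b)) is a bijection. -/

import Mathlib

/-!
Expanding `det (X - A(b))` along the first row leaves only two minors: that of the first diagonal
entry is the same kind of determinant one size smaller (with `d` and `b` shifted), and that of the
top right entry is triangular with determinant `± 1`. Induction gives
`χ_{A(b)} = ∏_{j < n} (X - d_j) - ∑_{i < n-1} b_i ∏_{j < i} (X - d_j)`.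
Hence `b ↦ (c_0, …, c_{n-2})` is affine, and its linear part has as columns the coefficient
vectors of the monic polynomials `∏_{j < i} (X - d_j)` of degree `i`: a unitriangular matrix.
-/

open Polynomial

/-- The matrix with diagonal `d`, subdiagonal entries `1`, last column
entries `b` above the diagonal, and zeros elsewhere. -/
def matA {F : Type*} [Field F] (n : ℕ) (d : Fin n → F) (b : Fin (n - 1) → F) :
    Matrix (Fin n) (Fin n) F :=
  Matrix.of fun i j =>
    if i = j then d i
    else if (i : ℕ) = (j : ℕ) + 1 then 1
    else if (j : ℕ) = n - 1 then (if h : (i : ℕ) < n - 1 then b ⟨i, h⟩ else 0)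
    else 0

open Matrix Lagrange

section

variable {R : Type*} [CommRing R]

theorem det_of_coeff_eq_one_of_monic {m : ℕ} (Q : Fin m → R[X]) (hmonic : ∀ i, (Q i).Monic)
    (hdeg : ∀ i, (Q i).natDegree = i) : (Matrix.of fun k i : Fin m => (Q i).coeff k).det = 1 := by
  have htri : (Matrix.of fun k i : Fin m => (Q i).coeff k).IsUpperTriangular := fun k i hik =>
    coeff_eq_zero_of_natDegree_lt (by rw [hdeg]; exact hik)
  rw [det_of_isUpperTriangular htri]
  refine Finset.prod_eq_one fun i _ => ?_
  simpa [hdeg i] using (hmonic i).coeff_natDegree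

theorem bijective_coeff_sub_sum_C_mul_of_monic {m : ℕ} (p : R[X]) (Q : Fin m → R[X])
    (hmonic : ∀ i, (Q i).Monic) (hdeg : ∀ i, (Q i).natDegree = i) :
    Function.Bijective fun b : Fin m → R =>
      fun k : Fin m => (p - ∑ i, C (b i) * Q i).coeff k := by
  set M : Matrix (Fin m) (Fin m) R := Matrix.of fun k i => (Q i).coeff k
  have hM : IsUnit M := by
    rw [isUnit_iff_isUnit_det, det_of_coeff_eq_one_of_monic Q hmonic hdeg]
    exact isUnit_one
  have hcomp : (fun b : Fin m → R => fun k : Fin m => (p - ∑ i, C (b i) * Q i).coeff k) =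
      (fun v => (fun k : Fin m => p.coeff k) - v) ∘ M.mulVec := by
    ext b k
    simp [M, mulVec, dotProduct, mul_comm]
  rw [hcomp]
  exact (Equiv.subLeft _).bijective.comp
    ⟨mulVec_injective_of_isUnit hM, mulVec_surjective_iff_isUnit.2 hM⟩

/-- `matA` with `d` and `b` read off sequences, so that deleting the first row and column stays
within the family (`matANat_submatrix_succ`). -/
def matANat (n : ℕ) (d b : ℕ → R) : Matrix (Fin n) (Fin n) R :=
  Matrix.of fun i j =>
    if (i : ℕ) = j then d i
    else if (i : ℕ) = j + 1 then 1
    else if (j : ℕ) = n - 1 then (if (i : ℕ) < n - 1 then b i else 0)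
    else 0

theorem nodal_range_succ (n : ℕ) (v : ℕ → R) :
    nodal (Finset.range (n + 1)) v =
      (X - C (v 0)) * nodal (Finset.range n) (fun k => v (k + 1)) := by
  rw [nodal, Finset.prod_range_succ', mul_comm, nodal]

theorem charmatrix_submatrix {m n : Type*} [Fintype m] [DecidableEq m] [Fintype n] [DecidableEq n]
    (M : Matrix n n R) {f : m → n} (hf : Function.Injective f) :
    (charmatrix M).submatrix f f = charmatrix (M.submatrix f f) := by
  ext i j
  rcases eq_or_ne i j with rfl | hij
  · simp [charmatrix_apply_eq]
  · rw [submatrix_apply, charmatrix_apply_ne _ _ _ (hf.ne hij), charmatrix_apply_ne _ _ _ hij,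
      submatrix_apply]

theorem matANat_submatrix_succ (n : ℕ) (d b : ℕ → R) :
    (matANat (n + 1) d b).submatrix Fin.succ Fin.succ =
      matANat n (fun k => d (k + 1)) (fun k => b (k + 1)) := by
  ext i j
  simp only [matANat, submatrix_apply, of_apply, Fin.val_succ]
  split_ifs <;> first | rfl | omega

theorem det_charmatrix_matANat_submatrix_succ_castSucc (n : ℕ) (d b : ℕ → R) :
    ((charmatrix (matANat (n + 1) d b)).submatrix Fin.succ Fin.castSucc).det = (-1) ^ n := by
  set M := (charmatrix (matANat (n + 1) d b)).submatrix Fin.succ Fin.castSucc with hM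
  have hentry : ∀ i j : Fin n, j ≤ i → M i j = if j = i then -1 else 0 := by
    intro i j hji
    rw [Fin.le_iff_val_le_val] at hji
    rw [hM, submatrix_apply, charmatrix_apply_ne _ _ _ (by simp [Fin.ext_iff]; omega)]
    simp only [matANat, of_apply, Fin.val_succ, Fin.val_castSucc, Fin.ext_iff]
    split_ifs <;> first | omega | simp
  have htri : M.IsUpperTriangular := fun i j hji => by
    rw [hentry i j hji.le, if_neg (show j ≠ i from hji.ne)]
  rw [det_of_isUpperTriangular htri]
  simp [hentry]

theorem charpoly_matANat_add_two (n : ℕ) (d b : ℕ → R) :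
    (matANat (n + 2) d b).charpoly =
      (X - C (d 0)) * (matANat (n + 1) (fun k => d (k + 1)) (fun k => b (k + 1))).charpoly -
        C (b 0) := by
  have hrow : ∀ k : Fin (n + 2), k ≠ 0 → k ≠ Fin.last (n + 1) →
      charmatrix (matANat (n + 2) d b) 0 k = 0 := by
    intro k hk0 hklast
    rw [ne_eq, Fin.ext_iff, Fin.val_zero] at hk0
    rw [ne_eq, Fin.ext_iff, Fin.val_last] at hklast
    rw [charmatrix_apply_ne _ _ _ (by simp [Fin.ext_iff]; omega)]
    simp only [matANat, of_apply, Fin.val_zero]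
    split_ifs <;> first | omega | simp_all
  have h00 : charmatrix (matANat (n + 2) d b) 0 0 = X - C (d 0) := by
    simp [charmatrix_apply_eq, matANat]
  have h0last : charmatrix (matANat (n + 2) d b) 0 (Fin.last (n + 1)) = -C (b 0) := by
    rw [charmatrix_apply_ne _ _ _ (by simp [Fin.ext_iff])]
    simp [matANat]
  rw [charpoly, det_succ_row_zero, Finset.sum_eq_add_of_mem 0 (Fin.last (n + 1))
    (Finset.mem_univ _) (Finset.mem_univ _) (Fin.last_pos.ne) (fun k _ hk => by
      rw [hrow k hk.1 hk.2, mul_zero, zero_mul])]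
  rw [Fin.succAbove_zero, charmatrix_submatrix _ (Fin.succ_injective _), matANat_submatrix_succ,
    Fin.succAbove_last, det_charmatrix_matANat_submatrix_succ_castSucc, h00, h0last, charpoly]
  simp only [Fin.val_zero, Fin.val_last, pow_zero, one_mul]
  have hsign : (-1 : R[X]) ^ (n + 1) * (-1) ^ (n + 1) = 1 := by rw [← mul_pow]; simp
  linear_combination (-C (b 0)) * hsign

theorem charpoly_matANat : ∀ (n : ℕ) (d b : ℕ → R),
    (matANat n d b).charpoly =
      nodal (Finset.range n) d - ∑ i ∈ Finset.range (n - 1), C (b i) * nodal (Finset.range i) d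
  | 0, d, b => by simp [charpoly]
  | 1, d, b => by simp [charpoly, charmatrix_apply_eq, matANat, nodal]
  | n + 2, d, b => by
    rw [charpoly_matANat_add_two, charpoly_matANat (n + 1), nodal_range_succ (n + 1),
      show n + 2 - 1 = n + 1 from rfl, Nat.add_sub_cancel, Finset.sum_range_succ', mul_sub,
      Finset.mul_sum]
    simp only [nodal_range_succ, Finset.range_zero, nodal_empty, mul_one,
      mul_left_comm (X - C (d 0))]
    ring

end

theorem matA_eq_matANat {F : Type*} [Field F] (n : ℕ) (d : Fin n → F) (b : Fin (n - 1) → F) :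
    matA n d b = matANat n (Function.extend Fin.val d 0) (Function.extend Fin.val b 0) := by
  ext i j
  simp only [matA, matANat, of_apply, Fin.ext_iff, Fin.val_injective.extend_apply]
  split_ifs with _ _ _ hi <;>
    first | rfl | omega | exact (Fin.val_injective.extend_apply b 0 ⟨i, hi⟩).symm

theorem charpoly_matA {F : Type*} [Field F] (n : ℕ) (d : Fin n → F) (b : Fin (n - 1) → F) :
    (matA n d b).charpoly = nodal (Finset.range n) (Function.extend Fin.val d 0) -
      ∑ i : Fin (n - 1), C (b i) * nodal (Finset.range i) (Function.extend Fin.val d 0) := by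
  rw [matA_eq_matANat, charpoly_matANat, Finset.sum_range]
  simp only [Fin.val_injective.extend_apply]

theorem stmt13_general {F : Type*} [Field F] (n : ℕ) (d : Fin n → F) :
    Function.Bijective
      (fun b : Fin (n - 1) → F =>
        fun i : Fin (n - 1) => (matA n d b).charpoly.coeff (i : ℕ)) := by
  simp_rw [charpoly_matA]
  exact bijective_coeff_sub_sum_C_mul_of_monic _ _ (fun _ => nodal_monic) (fun _ => by simp)

/-- The map sending `b` to the coefficients `(c_0, …, c_{n-2})` of the
characteristic polynomial of `A(b)` is a bijection `F^{n-1} → F^{n-1}`. -/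
theorem stmt13 {F : Type*} [Field F] (n : ℕ) (hn : 1 ≤ n) (d : Fin n → F) :
    Function.Bijective
      (fun b : Fin (n - 1) → F =>
        fun i : Fin (n - 1) => (matA n d b).charpoly.coeff (i : ℕ)) :=
  stmt13_general n d
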